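/- arXiv:1803.06610 — 3 statements merged into one kernel-verified Lean document; each statement's English description precedes it below -/
import Mathlib

section
/- If a convex body K in ℝⁿ forms a k-fold translative tiling of ℝⁿ for some positive integer k, then K is a polytope. -/
/-!
Fix a tile `T` of a `k`-fold tiling by convex bodies. The set of tiles containing a point is
upper semicontinuous, so near every boundary point of `T` there is a point `p ∈ ∂T` around which
this set is constant along `∂T`. There `∂T` is flat: otherwise a point inside the convex hull of
the nearby boundary lies inside every tile through `p`, while a point just outside `T` is covered
`k` times by the tiles through `p` other than `T`. A point just outside `T` across its supporting
hyperplane at `p` lies in a tile `T'` having `p` on its boundary (fewer than `k` tiles contain `p`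
in their interior); `T'` contains the flat piece of `∂T`, so it has the same supporting hyperplane
and lies on the other side of it. Hence `∂T` is covered by the hyperplanes separating `T` from its
finitely many neighbours, so `T` has finitely many extreme points and is a polytope by
Krein–Milman. `K` is a translate of such a tile.
-/

/-- `K + X` is a `k`-fold tiling of `ℝⁿ`. -/
def IsKFoldTilingN (n : ℕ) (K X : Set (Fin n → ℝ)) (k : ℕ) : Prop :=
  (∀ y, ∃ S : Finset (Fin n → ℝ), ↑S ⊆ {x ∈ X | y - x ∈ K} ∧ k ≤ S.card) ∧
  (∀ y, ∀ S : Finset (Fin n → ℝ), ↑S ⊆ {x ∈ X | y - x ∈ interior K} → S.card ≤ k)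

open Set Metric Filter Topology Pointwise

section Topology

variable {α ι : Type*} [TopologicalSpace α]

theorem IsPreconnected.inter_frontier_nonempty {s t : Set α} (hs : IsPreconnected s)
    (hst : (s ∩ t).Nonempty) (hst' : (s \ t).Nonempty) : (s ∩ frontier t).Nonempty := by
  by_contra h
  have hsub : s ⊆ interior t ∪ (closure t)ᶜ := fun x hx => by
    by_cases hx' : x ∈ closure t
    · exact Or.inl (by_contra fun hxi => h ⟨x, hx, hx', hxi⟩)
    · exact Or.inr hx'
  rcases hs.subset_or_subset isOpen_interior isClosed_closure.isOpen_compl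
      (disjoint_compl_right.mono_left interior_subset_closure) hsub with h' | h'
  · obtain ⟨x, hxs, hxt⟩ := hst'
    exact hxt (interior_subset (h' hxs))
  · obtain ⟨x, hxs, hxt⟩ := hst
    exact h' hxs (subset_closure hxt)

/-- A point of `S ∩ U` minimising `(F p).ncard` does the job. -/
theorem exists_eventually_eq_of_eventually_subset {F : α → Set ι} {S U : Set α}
    (hF : ∀ p, ∀ᶠ q in 𝓝 p, F q ⊆ F p) (hfin : ∀ p, (F p).Finite) (hU : IsOpen U)
    (hSU : (S ∩ U).Nonempty) : ∃ p ∈ S ∩ U, ∀ᶠ q in 𝓝[S] p, F q = F p := by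
  obtain ⟨p, hp, hmin⟩ :=
    exists_minimalFor_of_wellFoundedLT (· ∈ S ∩ U) (fun p => (F p).ncard) hSU
  refine ⟨p, hp, ?_⟩
  filter_upwards [self_mem_nhdsWithin, mem_nhdsWithin_of_mem_nhds (hU.mem_nhds hp.2),
    nhdsWithin_le_nhds (hF p)] with q hqS hqU hqp
  exact eq_of_subset_of_ncard_le hqp (hmin ⟨hqS, hqU⟩ (ncard_le_ncard hqp (hfin p))) (hfin p)

end Topology

section NormedSpace

variable {E ι : Type*} [NormedAddCommGroup E] [NormedSpace ℝ E]

theorem eventually_add_smul_mem {s : Set E} {x : E} (hs : s ∈ 𝓝 x) (v : E) :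
    ∀ᶠ t : ℝ in 𝓝 0, x + t • v ∈ s :=
  (Continuous.tendsto' (by fun_prop) 0 x (by simp)) hs

namespace ContinuousLinearMap

theorem apply_eq_zero_of_eventually_le {f : E →L[ℝ] ℝ} {p d : E}
    (h : ∀ᶠ t : ℝ in 𝓝 0, f (p + t • d) ≤ f p) : f d = 0 := by
  have hmax : IsLocalMax (fun t : ℝ => t * f d) 0 := h.mono fun t ht => by simpa using ht
  simpa using hmax.hasDerivAt_eq_zero (hasDerivAt_mul_const (f d))

theorem exists_lt_apply_of_mem_nhds {f : E →L[ℝ] ℝ} (hf : f ≠ 0) {s : Set E} {p : E}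
    (hs : s ∈ 𝓝 p) : ∃ q ∈ s, f p < f q := by
  by_contra! h
  exact hf (ext fun d =>
    apply_eq_zero_of_eventually_le ((eventually_add_smul_mem hs d).mono fun t ht => h _ ht))

theorem interior_setOf_apply_eq {f : E →L[ℝ] ℝ} (hf : f ≠ 0) (c : ℝ) :
    interior {w | f w = c} = ∅ := by
  refine eq_empty_of_forall_notMem fun x hx => ?_
  obtain ⟨q, hq, hxq⟩ := f.exists_lt_apply_of_mem_nhds hf (isOpen_interior.mem_nhds hx)
  have hx' : x ∈ {w | f w = c} := interior_subset hx
  have hq' : q ∈ {w | f w = c} := interior_subset hq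
  rw [mem_ofPred_eq] at hx' hq'
  exact hxq.ne (hx'.trans hq'.symm)

theorem exists_eq_smul_of_forall_le {f g : E →L[ℝ] ℝ} {s : Set E} {p : E} (hs : s ∈ 𝓝 p)
    (h : ∀ w ∈ s, g w = g p → f w ≤ f p) : ∃ c : ℝ, f = c • g := by
  have hker : ∀ d, g d = 0 → f d = 0 := fun d hd =>
    apply_eq_zero_of_eventually_le ((eventually_add_smul_mem hs d).mono fun t ht =>
      h _ ht (by simp [hd]))
  have hspan := mem_span_of_iInf_ker_le_ker (ι := Unit) (L := fun _ => (g : E →ₗ[ℝ] ℝ))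
    (K := (f : E →ₗ[ℝ] ℝ)) fun d hd => hker d (by simpa using hd)
  rw [range_const, Submodule.mem_span_singleton] at hspan
  obtain ⟨c, hc⟩ := hspan
  exact ⟨c, ext fun d => (LinearMap.congr_fun hc d).symm⟩

end ContinuousLinearMap

theorem IsOpen.exists_mem_forall_apply_ne [Finite ι] {U : Set E} (hU : IsOpen U)
    (hne : U.Nonempty) {f : ι → E →L[ℝ] ℝ} (hf : ∀ i, f i ≠ 0) (c : ι → ℝ) :
    ∃ w ∈ U, ∀ i, f i w ≠ c i := by
  have hdense : Dense (⋂₀ range fun i => {w | f i w = c i}ᶜ) :=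
    (finite_range _).dense_sInter
      (forall_mem_range.2 fun i => (isClosed_eq (f i).continuous continuous_const).isOpen_compl)
      (forall_mem_range.2 fun i =>
        interior_eq_empty_iff_dense_compl.1 ((f i).interior_setOf_apply_eq (hf i) (c i)))
  obtain ⟨w, hwU, hw⟩ := hdense.inter_open_nonempty U hU hne
  exact ⟨w, hwU, fun i => hw _ (mem_range_self i)⟩

theorem IsClosed.mem_of_segment_inter_frontier {A : Set E} (hA : IsClosed A) {w z : E}
    (hw : w ∈ A) (h : ∀ ζ ∈ segment ℝ z w, ζ ∈ frontier A → ζ = z) : z ∈ A := by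
  by_contra hz
  obtain ⟨ζ, hζ, hζA⟩ := (convex_segment z w).isPreconnected.inter_frontier_nonempty
    ⟨w, right_mem_segment ℝ z w, hw⟩ ⟨z, left_mem_segment ℝ z w, hz⟩
  exact hz (h ζ hζ hζA ▸ hA.frontier_subset hζA)

theorem exists_forall_eq_of_affineSpan_ne_top [FiniteDimensional ℝ E] {s : Set E} {p : E}
    (hp : p ∈ s) (hs : affineSpan ℝ s ≠ ⊤) :
    ∃ g : E →L[ℝ] ℝ, g ≠ 0 ∧ ∀ q ∈ s, g q = g p := by
  have hdir : (affineSpan ℝ s).direction < ⊤ := by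
    rw [lt_top_iff_ne_top, Ne,
      AffineSubspace.direction_eq_top_iff_of_nonempty ⟨p, subset_affineSpan ℝ s hp⟩]
    exact hs
  obtain ⟨g, hg, hmap⟩ := Submodule.exists_dual_map_eq_bot_of_lt_top hdir inferInstance
  refine ⟨LinearMap.toContinuousLinearMap g, by simpa using hg, fun q hq => ?_⟩
  have hqp := Submodule.mem_map_of_mem (f := g)
    (AffineSubspace.vsub_mem_direction (subset_affineSpan ℝ s hq) (subset_affineSpan ℝ s hp))
  rw [hmap, Submodule.mem_bot, vsub_eq_sub, map_sub, sub_eq_zero] at hqp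
  simpa using hqp

end NormedSpace

section Convex

variable {E : Type*} [NormedAddCommGroup E] [NormedSpace ℝ E] {C : Set E}

theorem Convex.exists_forall_lt_of_notMem_interior (hC : Convex ℝ C) (hCi : (interior C).Nonempty)
    {p : E} (hp : p ∉ interior C) :
    ∃ f : E →L[ℝ] ℝ, (∀ y ∈ interior C, f y < f p) ∧ ∀ y ∈ C, f y ≤ f p := by
  obtain ⟨f, hf⟩ := geometric_hahn_banach_open_point hC.interior isOpen_interior hp
  refine ⟨f, hf, fun y hy => ?_⟩
  have hy' : y ∈ closure (interior C) :=
    hC.closure_interior_eq_closure_of_nonempty_interior hCi ▸ subset_closure hy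
  exact closure_minimal (fun u hu => (hf u hu).le) (isClosed_le f.continuous continuous_const) hy'

theorem IsClosed.forall_mem_of_frontier_subset_level (hC : IsClosed C) {g : E →L[ℝ] ℝ}
    {p y : E} {r : ℝ} (hy : y ∈ C ∩ ball p r) (hgy : g y ≠ g p)
    (hflat : ∀ q ∈ frontier C ∩ ball p r, g q = g p) :
    ∀ w ∈ ball p r, g w = g p → w ∈ C := by
  intro w hw hgw
  refine hC.mem_of_segment_inter_frontier hy.1 fun ζ hζ hζC => ?_
  obtain ⟨a, b, ha, hb, hab, rfl⟩ := hζ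
  have hζg := hflat _ ⟨hζC, convex_ball p r hw hy.2 ha hb hab⟩
  simp only [map_add, map_smul, smul_eq_mul, hgw] at hζg
  have hb0 : b = 0 := by
    have : b * (g y - g p) = 0 := by linear_combination hζg - g p * hab
    exact (mul_eq_zero.1 this).resolve_right (sub_ne_zero.2 hgy)
  obtain rfl : a = 1 := by linarith
  simp [hb0]

theorem Convex.exists_supporting_of_frontier_subset_level (hC : Convex ℝ C) (hCc : IsClosed C)
    (hCi : (interior C).Nonempty) {p : E} (hp : p ∈ frontier C) {r : ℝ} (hr : 0 < r)
    {g : E →L[ℝ] ℝ} (hg : g ≠ 0) (hflat : ∀ q ∈ frontier C ∩ ball p r, g q = g p) :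
    ∃ f : E →L[ℝ] ℝ, (∀ y ∈ interior C, f y < f p) ∧ (∀ y ∈ C, f y ≤ f p) ∧
      ∀ w ∈ ball p r, f w = f p → w ∈ C := by
  have hp' : p ∈ closure (interior C) :=
    hC.closure_interior_eq_closure_of_nonempty_interior hCi ▸ hp.1
  obtain ⟨y, ⟨hyr, hyC⟩, hgy⟩ : ∃ y ∈ ball p r ∩ interior C, g y ≠ g p := by
    by_contra! h
    have hsub := interior_maximal (s := {w | g w = g p}) h (isOpen_ball.inter isOpen_interior)
    rw [g.interior_setOf_apply_eq hg] at hsub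
    exact (mem_closure_iff.1 hp' _ isOpen_ball (mem_ball_self hr)).ne_empty
      (subset_empty_iff.1 hsub)
  have hslice := hCc.forall_mem_of_frontier_subset_level ⟨interior_subset hyC, hyr⟩ hgy hflat
  obtain ⟨f, hfi, hfC⟩ := hC.exists_forall_lt_of_notMem_interior hCi hp.2
  obtain ⟨c, rfl⟩ := f.exists_eq_smul_of_forall_le (ball_mem_nhds p hr)
    fun w hw hgw => hfC w (hslice w hw hgw)
  have hc : c ≠ 0 := by
    rintro rfl
    simpa using hfi y hyC
  refine ⟨c • g, hfi, hfC, fun w hw hfw => hslice w hw ?_⟩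
  simpa [hc] using hfw

/-- The supporting functional of `C` at `p` is a multiple of `f`. -/
theorem Convex.forall_le_of_level_subset (hC : Convex ℝ C) (hCi : (interior C).Nonempty)
    {f : E →L[ℝ] ℝ} {s : Set E} {p q : E} (hs : s ∈ 𝓝 p) (hp : p ∉ interior C)
    (hlevel : ∀ w ∈ s, f w = f p → w ∈ C) (hq : q ∈ C) (hfq : f p < f q) :
    ∀ y ∈ C, f p ≤ f y := by
  obtain ⟨f', hf'i, hf'C⟩ := hC.exists_forall_lt_of_notMem_interior hCi hp
  obtain ⟨c, rfl⟩ := f'.exists_eq_smul_of_forall_le hs fun w hw hfw => hf'C w (hlevel w hw hfw)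
  have hc : c < 0 := by
    obtain ⟨u, hu⟩ := hCi
    have h₁ := hf'i u hu
    have h₂ := hf'C q hq
    simp only [FunLike.coe_smul, Pi.smul_apply, smul_eq_mul] at h₁ h₂
    have hc0 : c ≠ 0 := by
      rintro rfl
      simp at h₁
    exact hc0.lt_or_gt.resolve_right fun hc => by nlinarith
  intro y hy
  have := hf'C y hy
  simp only [FunLike.coe_smul, Pi.smul_apply, smul_eq_mul] at this
  nlinarith

end Convex

section Polytope

variable {E ι : Type*} [NormedAddCommGroup E] [NormedSpace ℝ E] {A : Set E}
  {f : ι → E →L[ℝ] ℝ} {c : ι → ℝ}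

/-- The segment from `z` to `w` meets no hyperplane `f i = c i` except possibly at `z`. -/
theorem IsClosed.mem_of_mul_nonneg (hA : IsClosed A)
    (hcov : frontier A ⊆ ⋃ i, {y | f i y = c i}) {w z : E} (hw : w ∈ A)
    (hwc : ∀ i, f i w ≠ c i) (hz : ∀ i, 0 ≤ (f i w - c i) * (f i z - c i)) : z ∈ A := by
  refine hA.mem_of_segment_inter_frontier hw fun ζ hζ hζA => ?_
  obtain ⟨a, b, ha, hb, hab, rfl⟩ := hζ
  obtain ⟨i, hi⟩ := mem_iUnion.1 (hcov hζA)
  simp only [mem_ofPred_eq, map_add, map_smul, smul_eq_mul] at hi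
  have hw' : 0 < (f i w - c i) * (f i w - c i) := mul_self_pos.2 (sub_ne_zero.2 (hwc i))
  have hb0 : b = 0 := by
    have : a * ((f i w - c i) * (f i z - c i)) + b * ((f i w - c i) * (f i w - c i)) = 0 := by
      linear_combination (f i w - c i) * hi - (f i w - c i) * c i * hab
    nlinarith [mul_nonneg ha (hz i)]
  obtain rfl : a = 1 := by linarith
  simp [hb0]

theorem Convex.eventually_add_smul_mem_of_frontier_subset [Finite ι] (hA : Convex ℝ A)
    (hAc : IsClosed A) (hAi : (interior A).Nonempty) (hf : ∀ i, f i ≠ 0)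
    (hcov : frontier A ⊆ ⋃ i, {y | f i y = c i}) {e d : E} (he : e ∈ A)
    (hd : ∀ i, f i e = c i → f i d = 0) : ∀ᶠ t : ℝ in 𝓝 0, e + t • d ∈ A := by
  set O := {y | ∀ i, f i e ≠ c i → 0 < (f i e - c i) * (f i y - c i)}
  have hO : O ∈ 𝓝 e := Filter.eventually_all.2 fun i => by
    by_cases hi : f i e = c i
    · exact Eventually.of_forall fun _ h => absurd hi h
    · have hcont : Continuous fun y => (f i e - c i) * (f i y - c i) := by fun_prop
      exact (hcont.continuousAt.eventually
        (lt_mem_nhds (mul_self_pos.2 (sub_ne_zero.2 hi)))).mono fun y hy _ => hy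
  have he' : e ∈ closure (interior A) :=
    hA.closure_interior_eq_closure_of_nonempty_interior hAi ▸ subset_closure he
  have hne : (interior O ∩ interior A).Nonempty :=
    mem_closure_iff.1 he' _ isOpen_interior (mem_interior_iff_mem_nhds.2 hO)
  obtain ⟨w, ⟨hwO, hwA⟩, hwc⟩ :=
    (isOpen_interior.inter isOpen_interior).exists_mem_forall_apply_ne hne hf c
  filter_upwards [eventually_add_smul_mem hO d] with t ht
  refine hAc.mem_of_mul_nonneg hcov (interior_subset hwA) hwc fun i => ?_
  by_cases hi : f i e = c i
  · simp [hi, hd i hi]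
  · have h₁ := interior_subset hwO i hi
    have h₂ := ht i hi
    have := mul_pos h₁ h₂
    nlinarith [sq_nonneg (f i e - c i)]

/-- An extreme point is determined by the set of hyperplanes through it. -/
theorem Convex.finite_extremePoints_of_frontier_subset [Finite ι] (hA : Convex ℝ A)
    (hAc : IsClosed A) (hAi : (interior A).Nonempty) (hf : ∀ i, f i ≠ 0)
    (hcov : frontier A ⊆ ⋃ i, {y | f i y = c i}) : (A.extremePoints ℝ).Finite := by
  refine Finite.of_finite_image (f := fun e => {i | f i e = c i}) (toFinite _)
    fun e he e' _ hee' => ?_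
  have hd : ∀ i, f i e = c i → f i (e' - e) = 0 := fun i hi => by
    have hi' : f i e' = c i := (Set.ext_iff.1 hee' i).1 hi
    simp [hi, hi']
  have hev := hA.eventually_add_smul_mem_of_frontier_subset hAc hAi hf hcov he.1 hd
  have hev' : ∀ᶠ t : ℝ in 𝓝 0, e + (-t) • (e' - e) ∈ A :=
    (continuous_neg.tendsto' (0 : ℝ) 0 neg_zero).eventually hev
  obtain ⟨t, ht, hplus, hminus⟩ :=
    ((eventually_mem_nhdsWithin (s := Ioi 0)).and
      ((hev.and hev').filter_mono nhdsWithin_le_nhds)).exists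
  have hseg : e ∈ openSegment ℝ (e + (-t) • (e' - e)) (e + t • (e' - e)) :=
    ⟨1 / 2, 1 / 2, by norm_num, by norm_num, by norm_num, by module⟩
  have := ((mem_extremePoints.1 he).2 _ hminus _ hplus hseg).2
  rw [add_eq_left, smul_eq_zero, sub_eq_zero] at this
  exact (this.resolve_left ht.ne').symm

theorem Convex.exists_finset_eq_convexHull_of_frontier_subset [Finite ι] (hA : Convex ℝ A)
    (hAc : IsCompact A) (hAi : (interior A).Nonempty) (hf : ∀ i, f i ≠ 0)
    (hcov : frontier A ⊆ ⋃ i, {y | f i y = c i}) :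
    ∃ V : Finset E, A = convexHull ℝ ↑V := by
  have hext := hA.finite_extremePoints_of_frontier_subset hAc.isClosed hAi hf hcov
  refine ⟨hext.toFinset, ?_⟩
  rw [hext.coe_toFinset, ← (hext.isClosed_convexHull ℝ).closure_eq,
    closure_convexHull_extremePoints hAc hA]

end Polytope

/-- Local finiteness makes both counts finite, so `ncard` takes no junk value here. -/
structure IsMultipleTiling {α ι : Type*} [TopologicalSpace α] (T : ι → Set α) (k : ℕ) :
    Prop where
  locallyFinite : LocallyFinite T
  le_ncard_mem : ∀ y, k ≤ {i | y ∈ T i}.ncard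
  ncard_mem_interior_le : ∀ y, {i | y ∈ interior (T i)}.ncard ≤ k

def HyperplaneSeparated {E : Type*} [NormedAddCommGroup E] [NormedSpace ℝ E] (A B : Set E) :
    Prop :=
  ∃ f : E →L[ℝ] ℝ, f ≠ 0 ∧ ∃ c, (∀ y ∈ A, f y ≤ c) ∧ ∀ y ∈ B, c ≤ f y

theorem HyperplaneSeparated.exists_inter_subset {E : Type*} [NormedAddCommGroup E]
    [NormedSpace ℝ E] {A B : Set E} (h : HyperplaneSeparated A B) :
    ∃ f : E →L[ℝ] ℝ, f ≠ 0 ∧ ∃ c, A ∩ B ⊆ {y | f y = c} := by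
  obtain ⟨f, hf, c, hA, hB⟩ := h
  exact ⟨f, hf, c, fun y hy => le_antisymm (hA y hy.1) (hB y hy.2)⟩

namespace IsMultipleTiling

section Topology

variable {α ι : Type*} [TopologicalSpace α] {T : ι → Set α} {k : ℕ}

theorem finite_mem_interior (ht : IsMultipleTiling T k) (y : α) :
    {i | y ∈ interior (T i)}.Finite :=
  (ht.locallyFinite.point_finite y).subset fun i hi => interior_subset (s := T i) hi

theorem ncard_mem_interior_lt (ht : IsMultipleTiling T k) {a : ι} {p : α}
    (hp : p ∈ closure (interior (T a))) (hpa : p ∉ interior (T a)) :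
    {i | p ∈ interior (T i)}.ncard < k := by
  have hev : ∀ᶠ q in 𝓝 p, ∀ i ∈ {i | p ∈ interior (T i)}, q ∈ interior (T i) :=
    (ht.finite_mem_interior p).eventually_all.2 fun i hi => isOpen_interior.mem_nhds hi
  obtain ⟨q, hqa, hq⟩ := ((mem_closure_iff_frequently.1 hp).and_eventually hev).exists
  calc {i | p ∈ interior (T i)}.ncard < (insert a {i | p ∈ interior (T i)}).ncard := by
        rw [ncard_insert_of_notMem (s := {i | p ∈ interior (T i)}) hpa (ht.finite_mem_interior p)]
        exact Nat.lt_succ_self _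
    _ ≤ {i | q ∈ interior (T i)}.ncard :=
        ncard_le_ncard (insert_subset hqa hq) (ht.finite_mem_interior q)
    _ ≤ k := ht.ncard_mem_interior_le q

theorem exists_mem_notMem_interior (ht : IsMultipleTiling T k) {a : ι} {p q : α}
    (hp : p ∈ closure (interior (T a))) (hpa : p ∉ interior (T a))
    (hqp : {i | q ∈ T i} ⊆ {i | p ∈ T i}) :
    ∃ i, q ∈ T i ∧ p ∈ T i ∧ p ∉ interior (T i) := by
  by_contra! h
  have hsub : {i | q ∈ T i} ⊆ {i | p ∈ interior (T i)} := fun i hi => h i hi (hqp hi)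
  exact (ht.ncard_mem_interior_lt hp hpa).not_ge
    ((ht.le_ncard_mem q).trans (ncard_le_ncard hsub (ht.finite_mem_interior p)))

end Topology

section NormedSpace

variable {E ι : Type*} [NormedAddCommGroup E] [NormedSpace ℝ E] [FiniteDimensional ℝ E]
  {T : ι → Set E} {k : ℕ}

/-- Otherwise a point inside the convex hull of the boundary piece lies inside every tile through
`p`, while a point of `U` outside `T a` is covered `k` times by the other tiles through `p`. -/
theorem affineSpan_frontier_inter_ne_top (ht : IsMultipleTiling T k)
    (hconv : ∀ i, Convex ℝ (T i)) {a : ι} (ha : IsClosed (T a)) {U : Set E} (hU : IsOpen U)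
    {p : E} (hpU : p ∈ U) (hp : p ∈ frontier (T a))
    (hsub : ∀ q ∈ U, {i | q ∈ T i} ⊆ {i | p ∈ T i})
    (heq : ∀ q ∈ frontier (T a) ∩ U, {i | q ∈ T i} = {i | p ∈ T i}) :
    affineSpan ℝ (frontier (T a) ∩ U) ≠ ⊤ := by
  intro htop
  obtain ⟨y, hy⟩ : (interior (convexHull ℝ (frontier (T a) ∩ U))).Nonempty := by
    rwa [(convex_convexHull ℝ _).interior_nonempty_iff_affineSpan_eq_top, affineSpan_convexHull]
  have hle : {i | p ∈ T i}.ncard ≤ k := by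
    refine (ncard_le_ncard (fun i hi => ?_) (ht.finite_mem_interior y)).trans
      (ht.ncard_mem_interior_le y)
    refine interior_mono (convexHull_min (fun q hq => ?_) (hconv i)) hy
    have hi' : i ∈ {i | q ∈ T i} := by rwa [heq q hq]
    exact hi'
  obtain ⟨q, hqU, hqa⟩ : (U ∩ (T a)ᶜ).Nonempty :=
    mem_closure_iff.1 (frontier_eq_closure_inter_closure.subset hp).2 U hU hpU
  have hlt : {i | q ∈ T i}.ncard < {i | p ∈ T i}.ncard :=
    ncard_lt_ncard ⟨hsub q hqU, fun h => hqa (h (ha.frontier_subset hp))⟩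
      (ht.locallyFinite.point_finite p)
  exact (ht.le_ncard_mem q).not_gt (hlt.trans_le hle)

theorem exists_mem_hyperplaneSeparated (ht : IsMultipleTiling T k)
    (hconv : ∀ i, Convex ℝ (T i)) (hclosed : ∀ i, IsClosed (T i))
    (hint : ∀ i, (interior (T i)).Nonempty) (a : ι) {V : Set E} (hV : IsOpen V)
    (hVa : (frontier (T a) ∩ V).Nonempty) :
    ∃ p ∈ V, ∃ x, p ∈ T x ∧ HyperplaneSeparated (T a) (T x) := by
  have hsub := ht.locallyFinite.eventually_subset hclosed
  obtain ⟨p, ⟨hpa, hpV⟩, hconst⟩ :=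
    exists_eventually_eq_of_eventually_subset hsub ht.locallyFinite.point_finite hV hVa
  obtain ⟨r, hr, hball⟩ := Metric.eventually_nhds_iff_ball.1
    ((eventually_nhdsWithin_iff.1 hconst).and ((hsub p).and (hV.mem_nhds hpV)))
  obtain ⟨g, hg, hflat⟩ := exists_forall_eq_of_affineSpan_ne_top
    (s := frontier (T a) ∩ ball p r) ⟨hpa, mem_ball_self hr⟩
    (ht.affineSpan_frontier_inter_ne_top hconv (hclosed a) isOpen_ball (mem_ball_self hr) hpa
      (fun q hq => (hball q hq).2.1) fun q hq => (hball q hq.2).1 hq.1)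
  obtain ⟨f, hfi, hfa, hlevel⟩ :=
    (hconv a).exists_supporting_of_frontier_subset_level (hclosed a) (hint a) hpa hr hg hflat
  have hf : f ≠ 0 := by
    rintro rfl
    obtain ⟨u, hu⟩ := hint a
    simpa using hfi u hu
  obtain ⟨q, hq, hfq⟩ := f.exists_lt_apply_of_mem_nhds hf (ball_mem_nhds p hr)
  have hpa' : p ∈ closure (interior (T a)) :=
    (hconv a).closure_interior_eq_closure_of_nonempty_interior (hint a) ▸ hpa.1
  obtain ⟨x, hqx, hpx, hpx'⟩ := ht.exists_mem_notMem_interior hpa' hpa.2 (hball q hq).2.1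
  -- the level piece lies on `∂(T a)`, where the tiles through a point are those through `p`
  have hlevel' : ∀ w ∈ ball p r, f w = f p → w ∈ T x := by
    intro w hw hfw
    have hwa : w ∈ frontier (T a) :=
      ⟨subset_closure (hlevel w hw hfw), fun hwi => (hfi w hwi).ne hfw⟩
    have hxw : x ∈ {i | w ∈ T i} := by rwa [(hball w hw).1 hwa]
    exact hxw
  exact ⟨p, (hball p (mem_ball_self hr)).2.2, x, hpx, f, hf, f p, hfa,
    (hconv x).forall_le_of_level_subset (hint x) (ball_mem_nhds p hr) hpx' hlevel' hqx hfq⟩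

theorem frontier_subset_iUnion_hyperplaneSeparated (ht : IsMultipleTiling T k)
    (hconv : ∀ i, Convex ℝ (T i)) (hclosed : ∀ i, IsClosed (T i))
    (hint : ∀ i, (interior (T i)).Nonempty) (a : ι) :
    frontier (T a) ⊆ ⋃ x ∈ {x | HyperplaneSeparated (T a) (T x)}, T x := by
  have hcl : IsClosed (⋃ x ∈ {x | HyperplaneSeparated (T a) (T x)}, T x) := by
    rw [biUnion_eq_iUnion]
    exact (ht.locallyFinite.comp_injective Subtype.val_injective).isClosed_iUnion
      fun x => hclosed x
  intro z hz
  rw [← hcl.closure_eq, _root_.mem_closure_iff]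
  intro V hV hzV
  obtain ⟨p, hpV, x, hpx, hsep⟩ :=
    ht.exists_mem_hyperplaneSeparated hconv hclosed hint a hV ⟨z, hz, hzV⟩
  exact ⟨p, hpV, mem_biUnion hsep hpx⟩

theorem exists_finset_eq_convexHull (ht : IsMultipleTiling T k) (hconv : ∀ i, Convex ℝ (T i))
    (hcomp : ∀ i, IsCompact (T i)) (hint : ∀ i, (interior (T i)).Nonempty) (a : ι) :
    ∃ V : Finset E, T a = convexHull ℝ ↑V := by
  let N := {x // HyperplaneSeparated (T a) (T x) ∧ (T x ∩ T a).Nonempty}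
  have : Finite N := ((ht.locallyFinite.finite_nonempty_inter_compact (hcomp a)).subset
    fun _ hx => hx.2).to_subtype
  choose f hf c hc using fun x : N => x.2.1.exists_inter_subset
  refine (hconv a).exists_finset_eq_convexHull_of_frontier_subset (hcomp a) (hint a) hf
    (c := c) ?_
  intro z hz
  have hza : z ∈ T a := (hcomp a).isClosed.frontier_subset hz
  obtain ⟨x, hx, hzx⟩ := mem_iUnion₂.1 (ht.frontier_subset_iUnion_hyperplaneSeparated hconv
    (fun i => (hcomp i).isClosed) hint a hz)
  exact mem_iUnion.2 ⟨⟨x, hx, z, hzx, hza⟩, hc _ ⟨hza, hzx⟩⟩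

end NormedSpace

end IsMultipleTiling

theorem locallyFinite_vadd_set {E : Type*} [SeminormedAddCommGroup E] {K X : Set E}
    (hK : Bornology.IsBounded K) (hX : ∀ R : ℝ, {x ∈ X | ‖x‖ ≤ R}.Finite) :
    LocallyFinite fun x : X => (x : E) +ᵥ K := by
  intro y
  obtain ⟨R, hR⟩ := hK.exists_norm_le
  refine ⟨ball y 1, ball_mem_nhds y one_pos,
    ((hX (‖y‖ + 1 + R)).preimage Subtype.val_injective.injOn).subset ?_⟩
  rintro x ⟨_, ⟨z, hz, rfl⟩, hzy⟩
  refine ⟨x.2, ?_⟩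
  have hzy' : ‖(x : E) + z - y‖ < 1 := mem_ball_iff_norm.1 hzy
  calc ‖(x : E)‖ = ‖((x : E) + z - y) + y - z‖ := by congr 1; abel
    _ ≤ ‖(x : E) + z - y‖ + ‖y‖ + ‖z‖ :=
        (norm_sub_le _ _).trans (by gcongr; exact norm_add_le _ _)
    _ ≤ ‖y‖ + 1 + R := by linarith [hR z hz]

theorem IsKFoldTilingN.isMultipleTiling {n k : ℕ} {K X : Set (Fin n → ℝ)}
    (htile : IsKFoldTilingN n K X k) (hK : Bornology.IsBounded K)
    (hX : ∀ R : ℝ, {x ∈ X | ‖x‖ ≤ R}.Finite) :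
    IsMultipleTiling (fun x : X => (x : Fin n → ℝ) +ᵥ K) k := by
  have hlf := locallyFinite_vadd_set hK hX
  have hmem : ∀ (y : Fin n → ℝ) (L : Set (Fin n → ℝ)) (x : X),
      y ∈ (x : Fin n → ℝ) +ᵥ L ↔ y - x ∈ L := fun y L x => by
    rw [mem_vadd_set_iff_neg_vadd_mem, vadd_eq_add, neg_add_eq_sub]
  refine ⟨hlf, fun y => ?_, fun y => ?_⟩
  · obtain ⟨S, hS, hk⟩ := htile.1 y
    refine hk.trans ?_
    rw [← ncard_coe_finset, ← ncard_image_of_injective _ Subtype.val_injective]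
    refine ncard_le_ncard (fun x hx => ⟨⟨x, (hS hx).1⟩, (hmem _ _ _).2 (hS hx).2, rfl⟩)
      ((hlf.point_finite y).image _)
  · have hfin : {x : X | y ∈ interior ((x : Fin n → ℝ) +ᵥ K)}.Finite :=
      (hlf.point_finite y).subset fun x hx => interior_subset (s := (x : Fin n → ℝ) +ᵥ K) hx
    rw [← ncard_image_of_injective _ Subtype.val_injective,
      ← (hfin.image Subtype.val).coe_toFinset, ncard_coe_finset]
    refine htile.2 y _ fun x hx => ?_
    obtain ⟨x, hxy, rfl⟩ := (hfin.image Subtype.val).mem_toFinset.1 hx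
    have hx' : y ∈ (x : Fin n → ℝ) +ᵥ interior K :=
      interior_vadd (x : Fin n → ℝ) K ▸ hxy
    exact ⟨x.2, (hmem _ _ _).1 hx'⟩

/-- If a convex body forms a `k`-fold translative tiling of `ℝⁿ`, then it is a polytope. -/
theorem multiple_translative_tile_is_polytope (n : ℕ) (K : Set (Fin n → ℝ))
    (hconv : Convex ℝ K) (hcomp : IsCompact K) (hint : (interior K).Nonempty)
    (k : ℕ) (hk : 0 < k) (X : Set (Fin n → ℝ))
    (hdisc : ∀ R : ℝ, {x ∈ X | ‖x‖ ≤ R}.Finite)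
    (htile : IsKFoldTilingN n K X k) :
    ∃ V : Finset (Fin n → ℝ), K = convexHull ℝ ↑V := by
  classical
  have ht := htile.isMultipleTiling hcomp.isBounded hdisc
  obtain ⟨a, -⟩ := nonempty_of_ncard_ne_zero (hk.trans_le (ht.le_ncard_mem 0)).ne'
  obtain ⟨V, hV⟩ := ht.exists_finset_eq_convexHull (fun x => hconv.vadd _)
    (fun x => hcomp.vadd _) (fun x => interior_vadd (x : Fin n → ℝ) K ▸ hint.vadd_set) a
  refine ⟨-(a : Fin n → ℝ) +ᵥ V, ?_⟩
  rw [Finset.coe_vadd_finset, convexHull_vadd, ← hV, neg_vadd_vadd]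
end

section
/- For 0 < α < 1/4, let D₈(α) be the octagon with vertices v₁ = (-α, -3/2), v₂ = (1-α, -3/2), v₃ = (1+α, -1/2), v₄ = (1-α, 1/2), v₅ = -v₁, v₆ = -v₂, v₇ = -v₃, v₈ = -v₄. Then D₈(α) + ℤ² is a five-fold lattice tiling of ℝ². -/
set_option maxHeartbeats 1000000

/-- `K + X` is a `k`-fold tiling of the plane. -/
def IsKFoldTiling (K X : Set (ℝ × ℝ)) (k : ℕ) : Prop :=
  (∀ y : ℝ × ℝ, ∃ S : Finset (ℝ × ℝ), ↑S ⊆ {x ∈ X | y - x ∈ K} ∧ k ≤ S.card) ∧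
  (∀ y : ℝ × ℝ, ∀ S : Finset (ℝ × ℝ), ↑S ⊆ {x ∈ X | y - x ∈ interior K} → S.card ≤ k)

/-- The integer lattice `ℤ²` inside `ℝ²`. -/
def intLattice : Set (ℝ × ℝ) := {p | ∃ m n : ℤ, p = ((m : ℝ), (n : ℝ))}

/-- The octagon `D₈(α)` with vertices `(-α,-3/2), (1-α,-3/2), (1+α,-1/2), (1-α,1/2)`
and their negatives. -/
noncomputable def D₈α (α : ℝ) : Set (ℝ × ℝ) :=
  convexHull ℝ {(-α, -(3:ℝ)/2), (1 - α, -(3:ℝ)/2), (1 + α, -(1:ℝ)/2), (1 - α, (1:ℝ)/2),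
    (α, (3:ℝ)/2), (α - 1, (3:ℝ)/2), (-1 - α, (1:ℝ)/2), (α - 1, -(1:ℝ)/2)}

/-! ### Auxiliary lemmas -/

lemma vmem (α : ℝ) :
    ((-α, -(3:ℝ)/2) : ℝ × ℝ) ∈ D₈α α ∧ ((1 - α, -(3:ℝ)/2) : ℝ × ℝ) ∈ D₈α α ∧
    ((1 + α, -(1:ℝ)/2) : ℝ × ℝ) ∈ D₈α α ∧ ((1 - α, (1:ℝ)/2) : ℝ × ℝ) ∈ D₈α α ∧
    ((α, (3:ℝ)/2) : ℝ × ℝ) ∈ D₈α α ∧ ((α - 1, (3:ℝ)/2) : ℝ × ℝ) ∈ D₈α α ∧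
    ((-1 - α, (1:ℝ)/2) : ℝ × ℝ) ∈ D₈α α ∧ ((α - 1, -(1:ℝ)/2) : ℝ × ℝ) ∈ D₈α α :=
  ⟨subset_convexHull ℝ _ (by simp [D₈α]), subset_convexHull ℝ _ (by simp [D₈α]),
   subset_convexHull ℝ _ (by simp [D₈α]), subset_convexHull ℝ _ (by simp [D₈α]),
   subset_convexHull ℝ _ (by simp [D₈α]), subset_convexHull ℝ _ (by simp [D₈α]),
   subset_convexHull ℝ _ (by simp [D₈α]), subset_convexHull ℝ _ (by simp [D₈α])⟩

/-- middle band of the octagon -/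
lemma mid_mem (α x y : ℝ) (hy1 : -(1/2) ≤ y) (hy2 : y ≤ 1/2)
    (hx1 : -1 - 2*α*y ≤ x) (hx2 : x ≤ 1 - 2*α*y) : (x, y) ∈ D₈α α := by
  obtain ⟨_, _, h3, h4, _, _, h7, h8⟩ := vmem α
  have hconv : Convex ℝ (D₈α α) := convex_convexHull ℝ _
  obtain ⟨s, hs0, hs1, hsval⟩ :
      ∃ s : ℝ, 0 ≤ s ∧ s ≤ 1 ∧ s * 2 = x + 2*α*y + 1 :=
    ⟨(x + 2*α*y + 1)/2, div_nonneg (by linarith) (by norm_num), by rw [div_le_one (by norm_num)]; linarith,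
      div_mul_cancel₀ _ (by norm_num)⟩
  have hbot : (1-s) • ((α - 1, -(1:ℝ)/2) : ℝ × ℝ) + s • ((1 + α, -(1:ℝ)/2) : ℝ × ℝ) ∈ D₈α α :=
    hconv h8 h3 (by linarith) hs0 (by ring)
  have htop : (1-s) • ((-1 - α, (1:ℝ)/2) : ℝ × ℝ) + s • ((1 - α, (1:ℝ)/2) : ℝ × ℝ) ∈ D₈α α :=
    hconv h7 h4 (by linarith) hs0 (by ring)
  have key : ((x, y) : ℝ × ℝ) =
      (1-(y+1/2)) • ((1-s) • ((α - 1, -(1:ℝ)/2) : ℝ × ℝ) + s • ((1 + α, -(1:ℝ)/2) : ℝ × ℝ)) +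
      (y+1/2) • ((1-s) • ((-1 - α, (1:ℝ)/2) : ℝ × ℝ) + s • ((1 - α, (1:ℝ)/2) : ℝ × ℝ)) := by
    simp only [Prod.smul_mk, Prod.mk_add_mk, smul_eq_mul, Prod.mk.injEq]
    constructor
    · linear_combination -hsval
    · ring
  rw [key]
  exact hconv hbot htop (by linarith) (by linarith) (by ring)

/-- top band: `1/2 ≤ y ≤ 3/2`, `-1-2α+2αy ≤ x ≤ 3/2-2α-(1-2α)y`. -/
lemma top_mem (α x y : ℝ) (hy1 : 1/2 ≤ y) (hy2 : y ≤ 3/2)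
    (hx1 : -1 - 2*α + 2*α*y ≤ x) (hx2 : x ≤ 3/2 - 2*α - (1-2*α)*y) : (x, y) ∈ D₈α α := by
  obtain ⟨_, _, _, h4, h5, h6, h7, _⟩ := vmem α
  have hconv : Convex ℝ (D₈α α) := convex_convexHull ℝ _
  have hden : (0:ℝ) < 5/2 - y := by linarith
  obtain ⟨s, hs0, hs1, hsval⟩ :
      ∃ s : ℝ, 0 ≤ s ∧ s ≤ 1 ∧ s * (5/2 - y) = x + 1 + 2*α - 2*α*y :=
    ⟨(x + 1 + 2*α - 2*α*y)/(5/2 - y), div_nonneg (by linarith) (by linarith),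
      (div_le_one hden).2 (by linarith), div_mul_cancel₀ _ (ne_of_gt hden)⟩
  have hbot : (1-s) • ((-1 - α, (1:ℝ)/2) : ℝ × ℝ) + s • ((1 - α, (1:ℝ)/2) : ℝ × ℝ) ∈ D₈α α :=
    hconv h7 h4 (by linarith) hs0 (by ring)
  have htop : (1-s) • ((α - 1, (3:ℝ)/2) : ℝ × ℝ) + s • ((α, (3:ℝ)/2) : ℝ × ℝ) ∈ D₈α α :=
    hconv h6 h5 (by linarith) hs0 (by ring)
  have key : ((x, y) : ℝ × ℝ) =
      (1-(y-1/2)) • ((1-s) • ((-1 - α, (1:ℝ)/2) : ℝ × ℝ) + s • ((1 - α, (1:ℝ)/2) : ℝ × ℝ)) +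
      (y-1/2) • ((1-s) • ((α - 1, (3:ℝ)/2) : ℝ × ℝ) + s • ((α, (3:ℝ)/2) : ℝ × ℝ)) := by
    simp only [Prod.smul_mk, Prod.mk_add_mk, smul_eq_mul, Prod.mk.injEq]
    constructor
    · linear_combination -hsval
    · ring
  rw [key]
  exact hconv hbot htop (by linarith) (by linarith) (by ring)

/-- bottom band: `-3/2 ≤ y ≤ -1/2`, `-3/2+2α-(1-2α)y ≤ x ≤ 1+2α+2αy`. -/
lemma bot_mem (α x y : ℝ) (hy1 : -(3/2) ≤ y) (hy2 : y ≤ -(1/2))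
    (hx1 : -(3/2) + 2*α - (1-2*α)*y ≤ x) (hx2 : x ≤ 1 + 2*α + 2*α*y) : (x, y) ∈ D₈α α := by
  obtain ⟨h1, h2, h3, _, _, _, _, h8⟩ := vmem α
  have hconv : Convex ℝ (D₈α α) := convex_convexHull ℝ _
  have hden : (0:ℝ) < y + 5/2 := by linarith
  obtain ⟨s, hs0, hs1, hsval⟩ :
      ∃ s : ℝ, 0 ≤ s ∧ s ≤ 1 ∧ s * (y + 5/2) = x + 3/2 - 2*α + (1-2*α)*y :=
    ⟨(x + 3/2 - 2*α + (1-2*α)*y)/(y + 5/2), div_nonneg (by linarith) (by linarith),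
      (div_le_one hden).2 (by linarith), div_mul_cancel₀ _ (ne_of_gt hden)⟩
  have hbot : (1-s) • ((-α, -(3:ℝ)/2) : ℝ × ℝ) + s • ((1 - α, -(3:ℝ)/2) : ℝ × ℝ) ∈ D₈α α :=
    hconv h1 h2 (by linarith) hs0 (by ring)
  have htop : (1-s) • ((α - 1, -(1:ℝ)/2) : ℝ × ℝ) + s • ((1 + α, -(1:ℝ)/2) : ℝ × ℝ) ∈ D₈α α :=
    hconv h8 h3 (by linarith) hs0 (by ring)
  have key : ((x, y) : ℝ × ℝ) =
      (1-(y+3/2)) • ((1-s) • ((-α, -(3:ℝ)/2) : ℝ × ℝ) + s • ((1 - α, -(3:ℝ)/2) : ℝ × ℝ)) +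
      (y+3/2) • ((1-s) • ((α - 1, -(1:ℝ)/2) : ℝ × ℝ) + s • ((1 + α, -(1:ℝ)/2) : ℝ × ℝ)) := by
    simp only [Prod.smul_mk, Prod.mk_add_mk, smul_eq_mul, Prod.mk.injEq]
    constructor
    · linear_combination -hsval
    · ring
  rw [key]
  exact hconv hbot htop (by linarith) (by linarith) (by ring)

/-- The closed constraint set containing `D₈α`. -/
def Hset (α : ℝ) : Set (ℝ × ℝ) :=
  {p : ℝ × ℝ | (-(3/2) ≤ p.2 ∧ p.2 ≤ 3/2) ∧ (-1 ≤ p.1 + 2*α*p.2 ∧ p.1 + 2*α*p.2 ≤ 1) ∧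
    (-(1+2*α) ≤ p.1 - 2*α*p.2 ∧ p.1 - 2*α*p.2 ≤ 1+2*α) ∧
    (-(3/2-2*α) ≤ p.1 + (1-2*α)*p.2 ∧ p.1 + (1-2*α)*p.2 ≤ 3/2-2*α)}

lemma D8_subset_H {α : ℝ} (h0 : 0 < α) (h1 : α < 1/4) : D₈α α ⊆ Hset α := by
  unfold D₈α
  apply convexHull_min
  · intro p hp
    simp only [Set.mem_insert_iff, Set.mem_singleton_iff] at hp
    rcases hp with rfl|rfl|rfl|rfl|rfl|rfl|rfl|rfl <;>
      · simp only [Hset, Set.mem_setOf_eq]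
        norm_num
        constructor
        · constructor <;> nlinarith
        constructor
        · constructor <;> nlinarith
        constructor <;> nlinarith
  · rintro ⟨px, py⟩ hp ⟨qx, qy⟩ hq s t hs ht hst
    obtain ⟨⟨p1, p2⟩, ⟨p3, p4⟩, ⟨p5, p6⟩, ⟨p7, p8⟩⟩ := hp
    obtain ⟨⟨q1, q2⟩, ⟨q3, q4⟩, ⟨q5, q6⟩, ⟨q7, q8⟩⟩ := hq
    simp only [Hset, Set.mem_setOf_eq, Prod.smul_mk, Prod.mk_add_mk, smul_eq_mul] at *
    have hp1 := mul_le_mul_of_nonneg_left p1 hs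
    have hp2 := mul_le_mul_of_nonneg_left p2 hs
    have hp3 := mul_le_mul_of_nonneg_left p3 hs
    have hp4 := mul_le_mul_of_nonneg_left p4 hs
    have hp5 := mul_le_mul_of_nonneg_left p5 hs
    have hp6 := mul_le_mul_of_nonneg_left p6 hs
    have hp7 := mul_le_mul_of_nonneg_left p7 hs
    have hp8 := mul_le_mul_of_nonneg_left p8 hs
    have hq1 := mul_le_mul_of_nonneg_left q1 ht
    have hq2 := mul_le_mul_of_nonneg_left q2 ht
    have hq3 := mul_le_mul_of_nonneg_left q3 ht
    have hq4 := mul_le_mul_of_nonneg_left q4 ht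
    have hq5 := mul_le_mul_of_nonneg_left q5 ht
    have hq6 := mul_le_mul_of_nonneg_left q6 ht
    have hq7 := mul_le_mul_of_nonneg_left q7 ht
    have hq8 := mul_le_mul_of_nonneg_left q8 ht
    have hα : s * α + t * α = α := by rw [← add_mul, hst, one_mul]
    refine ⟨⟨by linarith, by linarith⟩, ⟨by linarith, by linarith⟩,
      ⟨by linarith, by linarith⟩, ⟨by linarith, by linarith⟩⟩

lemma interior_strict {α : ℝ} (h0 : 0 < α) (h1 : α < 1/4) {p : ℝ × ℝ}
    (hp : p ∈ interior (D₈α α)) :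
    (-(3/2) < p.2 ∧ p.2 < 3/2) ∧ (-1 < p.1 + 2*α*p.2 ∧ p.1 + 2*α*p.2 < 1) ∧
    (-(1+2*α) < p.1 - 2*α*p.2 ∧ p.1 - 2*α*p.2 < 1+2*α) ∧
    (-(3/2-2*α) < p.1 + (1-2*α)*p.2 ∧ p.1 + (1-2*α)*p.2 < 3/2-2*α) := by
  obtain ⟨ε, hε, hball⟩ := Metric.isOpen_iff.mp isOpen_interior p hp
  have hmem : ∀ d e : ℝ, |d| < ε → |e| < ε → ((p.1 + d, p.2 + e) : ℝ × ℝ) ∈ Hset α := by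
    intro d e hd he
    refine D8_subset_H h0 h1 (interior_subset (hball ?_))
    rw [Metric.mem_ball, Prod.dist_eq]
    have e1 : dist ((p.1 + d, p.2 + e) : ℝ × ℝ).1 p.1 = |d| := by
      simp [Real.dist_eq]
    have e2 : dist ((p.1 + d, p.2 + e) : ℝ × ℝ).2 p.2 = |e| := by
      simp [Real.dist_eq]
    rw [e1, e2]
    exact max_lt hd he
  have hd2 : |ε/2| < ε := by rw [abs_of_pos (by linarith)]; linarith
  have hd2' : |-(ε/2)| < ε := by rw [abs_neg]; exact hd2
  have h00 : |(0:ℝ)| < ε := by simpa using hε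
  have A := hmem (ε/2) 0 hd2 h00
  have B := hmem (-(ε/2)) 0 hd2' h00
  have C := hmem 0 (ε/2) h00 hd2
  have D := hmem 0 (-(ε/2)) h00 hd2'
  simp only [Hset, Set.mem_setOf_eq, add_zero] at A B C D
  obtain ⟨⟨-, -⟩, ⟨A3, A4⟩, ⟨A5, A6⟩, ⟨A7, A8⟩⟩ := A
  obtain ⟨⟨-, -⟩, ⟨B3, B4⟩, ⟨B5, B6⟩, ⟨B7, B8⟩⟩ := B
  obtain ⟨⟨C1, C2⟩, -, -, -⟩ := C
  obtain ⟨⟨D1, D2⟩, -, -, -⟩ := D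
  refine ⟨⟨by linarith, by linarith⟩, ⟨by linarith, by linarith⟩,
    ⟨by linarith, by linarith⟩, ⟨by linarith, by linarith⟩⟩

lemma pair_ne_fst {m m' n n' : ℤ} (h : m ≠ m') :
    (((m:ℝ), (n:ℝ)) : ℝ × ℝ) ≠ ((m':ℝ), (n':ℝ)) := by
  intro hc
  rw [Prod.mk.injEq] at hc
  exact h (by exact_mod_cast hc.1)

lemma pair_ne_snd {m m' n n' : ℤ} (h : n ≠ n') :
    (((m:ℝ), (n:ℝ)) : ℝ × ℝ) ≠ ((m':ℝ), (n':ℝ)) := by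
  intro hc
  rw [Prod.mk.injEq] at hc
  exact h (by exact_mod_cast hc.2)

lemma card5 {β : Type*} [DecidableEq β] {a b c d e : β} (hab : a ≠ b) (hac : a ≠ c)
    (had : a ≠ d) (hae : a ≠ e) (hbc : b ≠ c) (hbd : b ≠ d) (hbe : b ≠ e) (hcd : c ≠ d)
    (hce : c ≠ e) (hde : d ≠ e) : 5 ≤ ({a, b, c, d, e} : Finset β).card := by
  rw [Finset.card_insert_of_notMem (by simp [hab, hac, had, hae]),
    Finset.card_insert_of_notMem (by simp [hbc, hbd, hbe]),
    Finset.card_insert_of_notMem (by simp [hcd, hce]),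
    Finset.card_insert_of_notMem (by simp [hde]), Finset.card_singleton]

lemma card_le5 {β : Type*} [DecidableEq β] (a b c d e : β) :
    ({a, b, c, d, e} : Finset β).card ≤ 5 := by
  refine le_trans (Finset.card_insert_le _ _) (Nat.succ_le_succ ?_)
  refine le_trans (Finset.card_insert_le _ _) (Nat.succ_le_succ ?_)
  refine le_trans (Finset.card_insert_le _ _) (Nat.succ_le_succ ?_)
  refine le_trans (Finset.card_insert_le _ _) (Nat.succ_le_succ ?_)
  simp

/-- For `0 < α < 1/4`, `D₈(α) + ℤ²` is a five-fold lattice tiling of the plane. -/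
theorem D₈α_fivefold_lattice_tiling (α : ℝ) (h0 : 0 < α) (h1 : α < 1/4) :
    IsKFoldTiling (D₈α α) intLattice 5 := by
  classical
  constructor
  · -- lower bound: at least five closed translates cover any point
    rintro ⟨u, v⟩
    obtain ⟨N, hN1, hN2⟩ : ∃ N : ℤ, (N:ℝ) ≤ v + 1/2 ∧ v + 1/2 < N + 1 :=
      ⟨⌊v + 1/2⌋, Int.floor_le _, Int.lt_floor_add_one _⟩
    -- abbreviations (as real numbers)
    obtain ⟨m₁, hm₁lo, hm₁hi⟩ : ∃ m : ℤ, u + 2*α*(v-N) - 1 ≤ (m:ℝ) ∧ (m:ℝ) ≤ u + 2*α*(v-N) :=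
      ⟨⌈u + 2*α*(v-N)⌉ - 1, by push_cast; linarith [Int.le_ceil (u + 2*α*(v-(N:ℝ)))],
        by push_cast; linarith [Int.ceil_lt_add_one (u + 2*α*(v-(N:ℝ)))]⟩
    have hm₂lo : u + 2*α*(v-N) ≤ (m₁:ℝ) + 1 := by linarith
    have hm₂hi : ((m₁:ℝ) + 1) ≤ u + 2*α*(v-N) + 1 := by linarith
    obtain ⟨m₃, hm₃lo, hm₃hi⟩ : ∃ m : ℤ, u + (1-2*α)*(v-N) - 1/2 ≤ (m:ℝ) ∧
        (m:ℝ) ≤ u + (1-2*α)*(v-N) + 1/2 :=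
      ⟨⌈u + (1-2*α)*(v-N) - 1/2⌉,
        Int.le_ceil _, by linarith [Int.ceil_lt_add_one (u + (1-2*α)*(v-(N:ℝ)) - 1/2)]⟩
    obtain ⟨M, hMne, hMlo, hMhi⟩ : ∃ M : ℤ, M ≠ m₃ ∧
        u + 1 - 2*α*(v-N) - 2 ≤ (M:ℝ) ∧ (M:ℝ) ≤ u + 1 - 2*α*(v-N) := by
      by_cases hm : ⌈u + 1 - 2*α*(v-(N:ℝ))⌉ - 2 = m₃
      · refine ⟨⌈u + 1 - 2*α*(v-(N:ℝ))⌉ - 1, by omega, ?_, ?_⟩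
        · push_cast; linarith [Int.le_ceil (u + 1 - 2*α*(v-(N:ℝ)))]
        · push_cast; linarith [Int.ceil_lt_add_one (u + 1 - 2*α*(v-(N:ℝ)))]
      · refine ⟨⌈u + 1 - 2*α*(v-(N:ℝ))⌉ - 2, hm, ?_, ?_⟩
        · push_cast; linarith [Int.le_ceil (u + 1 - 2*α*(v-(N:ℝ)))]
        · push_cast; linarith [Int.ceil_lt_add_one (u + 1 - 2*α*(v-(N:ℝ)))]
    -- the fifth point, with its row
    obtain ⟨n', hn', hMmem⟩ : ∃ n' : ℤ, (n' = N + 1 ∨ n' = N - 1) ∧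
        ((u - M, v - (n':ℝ)) : ℝ × ℝ) ∈ D₈α α := by
      by_cases hside : (M:ℝ) < u + (1-2*α)*(v-N) - 1/2
      · refine ⟨N + 1, Or.inl rfl, ?_⟩
        push_cast
        apply bot_mem <;> push_cast <;> linarith
      · refine ⟨N - 1, Or.inr rfl, ?_⟩
        push_cast
        apply top_mem <;> push_cast <;> linarith
    refine ⟨{((m₁:ℝ), (N:ℝ)), (((m₁+1:ℤ):ℝ), (N:ℝ)), ((m₃:ℝ), ((N-1:ℤ):ℝ)),
      ((m₃:ℝ), ((N+1:ℤ):ℝ)), ((M:ℝ), (n':ℝ))}, ?_, ?_⟩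
    · intro x hx
      simp only [Finset.coe_insert, Set.mem_insert_iff, Finset.coe_singleton,
        Set.mem_singleton_iff] at hx
      have hsub : ∀ (m n : ℤ), ((u, v) : ℝ × ℝ) - ((m:ℝ), (n:ℝ)) = (u - m, v - n) := by
        intro m n; rfl
      rcases hx with rfl|rfl|rfl|rfl|rfl
      · refine ⟨⟨m₁, N, rfl⟩, ?_⟩
        rw [hsub]
        apply mid_mem <;> linarith
      · refine ⟨⟨m₁+1, N, rfl⟩, ?_⟩
        rw [hsub]
        apply mid_mem <;> push_cast <;> linarith
      · refine ⟨⟨m₃, N-1, rfl⟩, ?_⟩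
        rw [hsub]
        apply top_mem <;> push_cast <;> linarith
      · refine ⟨⟨m₃, N+1, rfl⟩, ?_⟩
        rw [hsub]
        apply bot_mem <;> push_cast <;> linarith
      · exact ⟨⟨M, n', rfl⟩, by rw [hsub]; exact hMmem⟩
    · apply card5
      · exact pair_ne_fst (by omega)
      · exact pair_ne_snd (by omega)
      · exact pair_ne_snd (by omega)
      · rcases hn' with rfl|rfl <;> exact pair_ne_snd (by omega)
      · exact pair_ne_snd (by omega)
      · exact pair_ne_snd (by omega)
      · rcases hn' with rfl|rfl <;> exact pair_ne_snd (by omega)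
      · exact pair_ne_snd (by omega)
      · exact pair_ne_fst (by omega)
      · exact pair_ne_fst (by omega)
  · -- upper bound: at most five open translates cover any point
    rintro ⟨u, v⟩ S hS
    obtain ⟨N, hN1, hN2⟩ : ∃ N : ℤ, (N:ℝ) ≤ v + 1/2 ∧ v + 1/2 < N + 1 :=
      ⟨⌊v + 1/2⌋, Int.floor_le _, Int.lt_floor_add_one _⟩
    obtain ⟨p, hplo, hphi⟩ : ∃ p : ℤ, (p:ℝ) ≤ u + 2*α*(v-N) ∧ u + 2*α*(v-N) < (p:ℝ) + 1 :=
      ⟨⌊u + 2*α*(v-(N:ℝ))⌋, Int.floor_le _, Int.lt_floor_add_one _⟩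
    obtain ⟨q, hqlo, hqhi⟩ : ∃ q : ℤ, (q:ℝ) + 1 ≤ u + 1 - 2*α*(v-N) ∧
        u + 1 - 2*α*(v-N) < (q:ℝ) + 2 :=
      ⟨⌊u + 1 - 2*α*(v-(N:ℝ))⌋ - 1, by push_cast; linarith [Int.floor_le (u + 1 - 2*α*(v-(N:ℝ)))],
        by push_cast; linarith [Int.lt_floor_add_one (u + 1 - 2*α*(v-(N:ℝ)))]⟩
    obtain ⟨r, hrlo, hrhi⟩ : ∃ r : ℤ, (r:ℝ) ≤ u + (1-2*α)*(v-N) + 1/2 ∧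
        u + (1-2*α)*(v-N) + 1/2 < (r:ℝ) + 1 :=
      ⟨⌊u + (1-2*α)*(v-(N:ℝ)) + 1/2⌋, Int.floor_le _, Int.lt_floor_add_one _⟩
    set T : Finset (ℝ × ℝ) :=
      {((p:ℝ), (N:ℝ)), ((p:ℝ)+1, (N:ℝ)),
       ((q:ℝ), if (q:ℝ) < u + (1-2*α)*(v-N) + 1/2 then (N:ℝ)+1 else (N:ℝ)-1),
       ((q:ℝ)+1, if (q:ℝ)+1 < u + (1-2*α)*(v-N) + 1/2 then (N:ℝ)+1 else (N:ℝ)-1),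
       ((r:ℝ), (N:ℝ)-1)} with hT
    have hsub : S ⊆ T := by
      intro x hx
      have hx' := hS (Finset.mem_coe.mpr hx)
      obtain ⟨⟨m, n, rfl⟩, hint⟩ := hx'
      have hsubeq : ((u, v) : ℝ × ℝ) - ((m:ℝ), (n:ℝ)) = (u - m, v - n) := rfl
      rw [hsubeq] at hint
      have hstr := interior_strict h0 h1 hint
      simp only at hstr
      obtain ⟨⟨s1, s2⟩, ⟨s3, s4⟩, ⟨s5, s6⟩, ⟨s7, s8⟩⟩ := hstr
      -- n ∈ {N-1, N, N+1}
      have hn1 : (n:ℝ) < (N:ℝ) + 2 := by linarith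
      have hn2 : (N:ℝ) - 2 < (n:ℝ) := by linarith
      have hn1' : n < N + 2 := by exact_mod_cast hn1
      have hn2' : N - 2 < n := by exact_mod_cast hn2
      have hncase : n = N - 1 ∨ n = N ∨ n = N + 1 := by omega
      obtain h'|h'|h' := hncase
      · -- n = N - 1, height v - n = (v-N)+1 ∈ [1/2,3/2)
        have hc : (n:ℝ) = (N:ℝ) - 1 := by rw [h']; push_cast; ring
        rw [hc] at s1 s2 s3 s4 s5 s6 s7 s8 ⊢
        have hm1 : (m:ℝ) < (q:ℝ) + 2 := by linarith
        have hm2 : (q:ℝ) - 1 < (m:ℝ) := by linarith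
        have hbm : u + (1-2*α)*(v-N) - 1/2 < (m:ℝ) := by linarith
        have hm1' : m < q + 2 := by exact_mod_cast hm1
        have hm2' : q - 1 < m := by exact_mod_cast hm2
        by_cases hlt : (m:ℝ) < u + (1-2*α)*(v-N) + 1/2
        · -- in both rows : m = r
          have hr1 : (m:ℝ) < (r:ℝ) + 1 := by linarith
          have hr2 : (r:ℝ) - 1 < (m:ℝ) := by linarith
          have hr1' : m < r + 1 := by exact_mod_cast hr1
          have hr2' : r - 1 < m := by exact_mod_cast hr2
          have hmr : m = r := by omega
          subst hmr
          simp [hT]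
        · have hmc : m = q ∨ m = q + 1 := by omega
          obtain hm'|hm' := hmc <;> subst hm'
          · have e : (((m:ℝ), (N:ℝ)-1) : ℝ × ℝ) =
                ((m:ℝ), if (m:ℝ) < u + (1-2*α)*(v-N) + 1/2 then (N:ℝ)+1 else (N:ℝ)-1) := by
              rw [if_neg hlt]
            rw [e]
            simp [hT]
          · have hlt' : ¬ ((q:ℝ) + 1 < u + (1-2*α)*(v-N) + 1/2) := by
              push_cast at hlt; push_cast; linarith
            have e : ((((q+1:ℤ):ℝ), (N:ℝ)-1) : ℝ × ℝ) =
                ((q:ℝ)+1, if (q:ℝ)+1 < u + (1-2*α)*(v-N) + 1/2 then (N:ℝ)+1 else (N:ℝ)-1) := by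
              rw [if_neg hlt']; push_cast; rfl
            rw [e]
            simp [hT]
      · -- n = N
        have hc : (n:ℝ) = (N:ℝ) := by rw [h']
        rw [hc] at s1 s2 s3 s4 s5 s6 s7 s8 ⊢
        have hm1 : (m:ℝ) < (p:ℝ) + 2 := by linarith
        have hm2 : (p:ℝ) - 1 < (m:ℝ) := by linarith
        have hm1' : m < p + 2 := by exact_mod_cast hm1
        have hm2' : p - 1 < m := by exact_mod_cast hm2
        have hmc : m = p ∨ m = p + 1 := by omega
        obtain hm'|hm' := hmc <;> subst hm'
        · simp [hT]
        · have e : ((((p+1:ℤ):ℝ), (N:ℝ)) : ℝ × ℝ) = ((p:ℝ)+1, (N:ℝ)) := by push_cast; rfl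
          rw [e]
          simp [hT]
      · -- n = N + 1, height v - n = (v-N)-1 ∈ [-3/2,-1/2)
        have hc : (n:ℝ) = (N:ℝ) + 1 := by rw [h']; push_cast; ring
        rw [hc] at s1 s2 s3 s4 s5 s6 s7 s8 ⊢
        have hm1 : (m:ℝ) < (q:ℝ) + 2 := by linarith
        have hm2 : (q:ℝ) - 1 < (m:ℝ) := by linarith
        have hm1' : m < q + 2 := by exact_mod_cast hm1
        have hm2' : q - 1 < m := by exact_mod_cast hm2
        have hlt : (m:ℝ) < u + (1-2*α)*(v-N) + 1/2 := by linarith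
        have hmc : m = q ∨ m = q + 1 := by omega
        obtain hm'|hm' := hmc <;> subst hm'
        · have e : (((m:ℝ), (N:ℝ)+1) : ℝ × ℝ) =
              ((m:ℝ), if (m:ℝ) < u + (1-2*α)*(v-N) + 1/2 then (N:ℝ)+1 else (N:ℝ)-1) := by
            rw [if_pos hlt]
          rw [e]
          simp [hT]
        · have hlt' : (q:ℝ) + 1 < u + (1-2*α)*(v-N) + 1/2 := by
            push_cast at hlt; push_cast; linarith
          have e : ((((q+1:ℤ):ℝ), (N:ℝ)+1) : ℝ × ℝ) =
              ((q:ℝ)+1, if (q:ℝ)+1 < u + (1-2*α)*(v-N) + 1/2 then (N:ℝ)+1 else (N:ℝ)-1) := by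
            rw [if_pos hlt']; push_cast; rfl
          rw [e]
          simp [hT]
    calc S.card ≤ T.card := Finset.card_le_card hsub
      _ ≤ 5 := card_le5 _ _ _ _ _
end

section
/- If P is a centrally symmetric convex polygon centered at the origin forming a k-fold lattice tiling of ℝ² with lattice Λ, then the relative interior of every edge G of P contains a point of (1/2)Λ. -/
open Set Filter Topology Module

section Plane

variable {K V : Type*} [Field K] [AddCommGroup V] [Module K V] [FiniteDimensional K V]

theorem Module.Dual.finrank_ker_eq_one (hV : finrank K V = 2) {f : Dual K V} (hf : f ≠ 0) :
    finrank K (LinearMap.ker f) = 1 := by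
  have := Module.Dual.finrank_ker_add_one_of_ne_zero hf
  omega

theorem Module.Dual.ker_eq_span_singleton (hV : finrank K V = 2) {f : Dual K V} (hf : f ≠ 0)
    {e : V} (he : e ≠ 0) (hfe : f e = 0) : LinearMap.ker f = K ∙ e :=
  (Submodule.eq_of_le_of_finrank_eq ((Submodule.span_singleton_le_iff_mem _ _).mpr hfe)
    (by rw [finrank_span_singleton he, finrank_ker_eq_one hV hf])).symm

theorem Module.Dual.ker_le_ker (hV : finrank K V = 2) {f g : Dual K V} (hf : f ≠ 0) {e : V}
    (he : e ≠ 0) (hfe : f e = 0) (hge : g e = 0) : LinearMap.ker f ≤ LinearMap.ker g := by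
  rw [ker_eq_span_singleton hV hf he hfe]
  exact (Submodule.span_singleton_le_iff_mem _ _).mpr hge

theorem Module.Dual.collinear_setOf_apply_eq (hV : finrank K V = 2) {f : Dual K V} (hf : f ≠ 0)
    (h : K) : Collinear K {x | f x = h} := by
  rw [collinear_iff_finrank_le_one, ← finrank_ker_eq_one hV hf]
  refine Submodule.finrank_mono (Submodule.span_le.mpr ?_)
  rintro _ ⟨x, hx, y, hy, rfl⟩
  simp_all [vsub_eq_sub]

end Plane

section Convex

variable {E : Type*} [NormedAddCommGroup E] [NormedSpace ℝ E] {P : Set E}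

theorem Convex.zero_mem_interior_of_neg_mem (hP : Convex ℝ P) (hint : (interior P).Nonempty)
    (hneg : ∀ x ∈ P, -x ∈ P) : (0 : E) ∈ interior P := by
  obtain ⟨z, hz⟩ := hint
  have hz' : -z ∈ interior P :=
    interior_maximal (fun x hx => by simpa using hneg _ (interior_subset hx)) isOpen_interior.neg
      (by simpa using hz)
  simpa using hP.interior hz hz' (by norm_num : (0 : ℝ) ≤ 1 / 2) (by norm_num : (0 : ℝ) ≤ 1 / 2)
    (by norm_num)

theorem Convex.exists_forall_lt_interior_and_forall_le (hP : Convex ℝ P)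
    (hint : (interior P).Nonempty) {x : E} (hx : x ∉ interior P) :
    ∃ g : E →L[ℝ] ℝ, (∀ y ∈ interior P, g y < g x) ∧ ∀ y ∈ P, g y ≤ g x := by
  obtain ⟨g, hg⟩ := geometric_hahn_banach_open_point hP.interior isOpen_interior hx
  refine ⟨g, hg, fun y hy => ?_⟩
  refine closure_minimal (fun y hy => (hg y hy).le) (isClosed_le g.continuous continuous_const) ?_
  rw [hP.closure_interior_eq_closure_of_nonempty_interior hint]
  exact subset_closure hy

theorem ContinuousLinearMap.apply_eq_of_mem_openSegment (g : E →L[ℝ] ℝ) {x₁ x₂ x : E}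
    (hx : x ∈ openSegment ℝ x₁ x₂) (h₁ : g x₁ ≤ g x) (h₂ : g x₂ ≤ g x) : g x₁ = g x := by
  obtain ⟨α, β, hα, hβ, hαβ, rfl⟩ := hx
  simp only [map_add, map_smul, smul_eq_mul] at h₁ h₂ ⊢
  have h₁₂ : g x₁ ≤ g x₂ := le_of_mul_le_mul_left (by linear_combination h₁ + g x₁ * hαβ) hβ
  have h₂₁ : g x₂ ≤ g x₁ := le_of_mul_le_mul_left (by linear_combination h₂ + g x₂ * hαβ) hα
  rw [le_antisymm h₂₁ h₁₂]
  linear_combination -g x₁ * hαβ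

theorem Convex.exists_forall_le_of_segment_subset_frontier (hP : Convex ℝ P)
    (h0 : (0 : E) ∈ interior P) {a b : E} (ha : a ∈ P) (hb : b ∈ P)
    (hedge : segment ℝ a b ⊆ frontier P) :
    ∃ f : E →L[ℝ] ℝ, 0 < f a ∧ f b = f a ∧ ∀ y ∈ P, f y ≤ f a := by
  obtain ⟨f, hf0, hfle⟩ := hP.exists_forall_lt_interior_and_forall_le ⟨0, h0⟩
    (hedge (midpoint_mem_segment (𝕜 := ℝ) a b)).2
  have hfa := f.apply_eq_of_mem_openSegment (midpoint_mem_openSegment a b) (hfle a ha)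
    (hfle b hb)
  have hfb := f.apply_eq_of_mem_openSegment
    (openSegment_symm ℝ a b ▸ midpoint_mem_openSegment a b) (hfle b hb) (hfle a ha)
  refine ⟨f, ?_, hfb.trans hfa.symm, fun y hy => hfa ▸ hfle y hy⟩
  simpa [hfa] using hf0 0 h0

theorem ContinuousLinearMap.apply_eq_of_mem_segment (g : E →L[ℝ] ℝ) {a b x : E}
    (hx : x ∈ segment ℝ a b) (h : g b = g a) : g x = g a := by
  obtain ⟨α, β, -, -, hαβ, rfl⟩ := hx
  simp only [map_add, map_smul, smul_eq_mul, h]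
  linear_combination g a * hαβ

theorem not_countable_openSegment {a b : E} (hab : a ≠ b) : ¬ (openSegment ℝ a b).Countable := by
  intro h
  have hIoo : (Ioo (0 : ℝ) 1).Countable := (h.preimage (AffineMap.lineMap_injective ℝ hab)).mono
    fun θ hθ => lineMap_mem_openSegment ℝ a b hθ
  simpa using hIoo.measure_zero MeasureTheory.volume

theorem midpoint_mem_openSegment_of_mem_segment {a b t s : E} (ht : t ∈ openSegment ℝ a b)
    (hs : s ∈ segment ℝ a b) : midpoint ℝ t s ∈ openSegment ℝ a b := by
  rw [openSegment_eq_image_lineMap] at ht ⊢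
  rw [segment_eq_image_lineMap] at hs
  obtain ⟨θ, ⟨hθ₀, hθ₁⟩, rfl⟩ := ht
  obtain ⟨σ, ⟨hσ₀, hσ₁⟩, rfl⟩ := hs
  refine ⟨(θ + σ) / 2, ⟨by linarith, by linarith⟩, ?_⟩
  simp only [AffineMap.lineMap_apply_module', midpoint_eq_smul_add, invOf_eq_inv]
  module

end Convex

section ConvexPlane

variable {E : Type*} [NormedAddCommGroup E] [NormedSpace ℝ E] [FiniteDimensional ℝ E]
  {P : Set E} {f : E →L[ℝ] ℝ}

theorem mem_segment_of_mem_extremePoints_of_apply_eq (hE : finrank ℝ E = 2) (hf : f ≠ 0)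
    {a b x : E} (ha : a ∈ P.extremePoints ℝ) (hb : b ∈ P.extremePoints ℝ) (hab : a ≠ b)
    (hx : x ∈ P) (hfb : f b = f a) (hfx : f x = f a) : x ∈ segment ℝ a b := by
  have hf' : (f : E →ₗ[ℝ] ℝ) ≠ 0 := by simpa using ContinuousLinearMap.coe_injective.ne hf
  have hcol : Collinear ℝ {a, b, x} :=
    (Module.Dual.collinear_setOf_apply_eq hE hf' (f a)).subset (by
      rintro _ (rfl | rfl | rfl) <;> simp [hfb, hfx])
  rcases hcol.wbtw_or_wbtw_or_wbtw with h | h | h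
  · obtain h' | rfl := (mem_extremePoints_iff_forall_segment.1 hb).2 a ha.1 x hx
      (mem_segment_iff_wbtw.2 h)
    · exact absurd h' hab
    · exact right_mem_segment ℝ a x
  · rw [segment_symm]
    exact mem_segment_iff_wbtw.2 h
  · obtain rfl | h' := (mem_extremePoints_iff_forall_segment.1 ha).2 x hx b hb.1
      (mem_segment_iff_wbtw.2 h)
    · exact left_mem_segment ℝ x b
    · exact absurd h'.symm hab

/-- A supporting line at a point of the chord would contain the chord, so it would be parallel to
the level lines of `f` and pass through `(f x₁ / f a) • a`, strictly between `-a` and `a`; but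
`a` and `-a` lie weakly, and `0` strictly, on its inner side. -/
theorem Convex.openSegment_subset_interior_of_apply_eq (hE : finrank ℝ E = 2) (hP : Convex ℝ P)
    (h0 : (0 : E) ∈ interior P) {a : E} (ha : a ∈ P) (hna : -a ∈ P) {x₁ x₂ : E}
    (hx₁ : x₁ ∈ P) (hx₂ : x₂ ∈ P) (hne : x₁ ≠ x₂) (hf : f x₂ = f x₁) (hlt : |f x₁| < f a) :
    openSegment ℝ x₁ x₂ ⊆ interior P := by
  intro x hx
  by_contra hxi
  obtain ⟨g, hg0, hgle⟩ := hP.exists_forall_lt_interior_and_forall_le ⟨0, h0⟩ hxi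
  have hg₁ := g.apply_eq_of_mem_openSegment hx (hgle _ hx₁) (hgle _ hx₂)
  have hg₂ := g.apply_eq_of_mem_openSegment (openSegment_symm ℝ x₁ x₂ ▸ hx) (hgle _ hx₂)
    (hgle _ hx₁)
  have hfa : 0 < f a := (abs_nonneg _).trans_lt hlt
  have hf' : (f : E →ₗ[ℝ] ℝ) ≠ 0 := fun h => hfa.ne' (by simpa using LinearMap.congr_fun h a)
  set r := f x₁ / f a with hr
  have hker := Module.Dual.ker_le_ker hE hf' (sub_ne_zero.2 hne.symm)
    (g := (g : E →ₗ[ℝ] ℝ)) (by simp [hf]) (by simp [hg₁, hg₂])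
  have hrg : r * g a = g x := by
    have : g (r • a - x₁) = 0 := hker (by simp [hr, hfa.ne'])
    simpa [hg₁, sub_eq_zero] using this
  have hr1 : |r| < 1 := by rwa [hr, abs_div, abs_of_pos hfa, div_lt_one hfa]
  have hgx : 0 < g x := by simpa using hg0 0 h0
  have hga : |g a| ≤ g x := abs_le.2 ⟨by linarith [map_neg g a, hgle _ hna], hgle _ ha⟩
  refine lt_irrefl (g x) ?_
  calc g x = r * g a := hrg.symm
    _ ≤ |r| * |g a| := (le_abs_self _).trans (abs_mul _ _).le
    _ ≤ |r| * g x := by gcongr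
    _ < g x := mul_lt_of_lt_one_left hgx hr1

theorem Convex.finite_frontier_inter_setOf_apply_eq (hE : finrank ℝ E = 2) (hP : Convex ℝ P)
    (hPc : IsClosed P) (h0 : (0 : E) ∈ interior P) {a : E} (ha : a ∈ P) (hna : -a ∈ P) {h : ℝ}
    (hh : |h| < f a) : (frontier P ∩ {x | f x = h}).Finite := by
  classical
  set S := frontier P ∩ {x | f x = h}
  have hnot : ∀ x ∈ S, ∀ y ∈ S, ∀ z ∈ S, x ≠ y → y ≠ z → ¬ Wbtw ℝ x y z := by
    rintro x ⟨hxP, hfx : f x = h⟩ y ⟨hyP, -⟩ z ⟨hzP, hfz : f z = h⟩ hxy hyz hw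
    have hxz : x ≠ z := by
      rintro rfl
      exact hxy ((wbtw_self_iff ℝ).1 hw).symm
    refine hyP.2 (hP.openSegment_subset_interior_of_apply_eq hE h0 ha hna
      (hPc.frontier_subset hxP) (hPc.frontier_subset hzP) hxz (hfz.trans hfx.symm)
      (by rwa [hfx]) ?_)
    exact mem_openSegment_of_ne_left_right hxy hyz.symm (mem_segment_iff_wbtw.2 hw)
  by_contra hinf
  obtain ⟨T, hTS, hT⟩ := Set.Infinite.exists_subset_card_eq hinf 3
  obtain ⟨x, y, z, hxy, hxz, hyz, rfl⟩ := Finset.card_eq_three.1 hT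
  simp only [Finset.coe_insert, Finset.coe_singleton, insert_subset_iff,
    singleton_subset_iff] at hTS
  obtain ⟨hx, hy, hz⟩ := hTS
  have hf : (f : E →ₗ[ℝ] ℝ) ≠ 0 := fun hf0 =>
    ((abs_nonneg h).trans_lt hh).ne' (by simpa using LinearMap.congr_fun hf0 a)
  have hcol : Collinear ℝ {x, y, z} := (Module.Dual.collinear_setOf_apply_eq hE hf h).subset (by
    rintro _ (rfl | rfl | rfl) <;> simp [hx.2, hy.2, hz.2])
  rcases hcol.wbtw_or_wbtw_or_wbtw with hw | hw | hw
  · exact hnot x hx y hy z hz hxy hyz hw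
  · exact hnot y hy z hz x hx hyz hxz.symm hw
  · exact hnot z hz x hx y hy hxz.symm hxy hw

theorem Convex.exists_mem_openSegment_forall_le_abs_apply_sub (hE : finrank ℝ E = 2)
    (hP : Convex ℝ P) (hPc : IsClosed P) (h0 : (0 : E) ∈ interior P) {a b : E} (ha : a ∈ P)
    (hna : -a ∈ P) (hab : a ≠ b) (hfb : f b = f a) {Λ : Set E} (hΛ : Λ.Countable) :
    ∃ t ∈ openSegment ℝ a b, ∀ l ∈ Λ, t - l ∈ frontier P → f a ≤ |f (t - l)| := by
  set B := ⋃ l ∈ Λ, (· + l) '' (frontier P ∩ {x | f x = f a - f l ∧ |f x| < f a})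
  have hB : B.Countable := hΛ.biUnion fun l _ => Set.Countable.image (Set.Finite.countable (by
    by_cases hl : |f a - f l| < f a
    · exact (hP.finite_frontier_inter_setOf_apply_eq hE hPc h0 ha hna hl).subset
        fun x hx => ⟨hx.1, hx.2.1⟩
    · refine Set.finite_empty.subset fun x ⟨_, hfx, hlt⟩ => hl ?_
      rwa [← hfx])) _
  obtain ⟨t, ht, htB⟩ := not_subset.1 fun hsub => not_countable_openSegment hab (hB.mono hsub)
  have hft : f t = f a := f.apply_eq_of_mem_segment (openSegment_subset_segment ℝ a b ht) hfb
  refine ⟨t, ht, fun l hl hfr => not_lt.1 fun hlt => htB (mem_biUnion hl ?_)⟩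
  exact ⟨t - l, ⟨hfr, by rw [map_sub, hft], hlt⟩, sub_add_cancel t l⟩

theorem apply_eq_or_midpoint_neg_mem_openSegment (hE : finrank ℝ E = 2)
    (hneg : ∀ x ∈ P, -x ∈ P) {a b : E} (ha : a ∈ P.extremePoints ℝ) (hb : b ∈ P.extremePoints ℝ)
    (hab : a ≠ b) (hfb : f b = f a) (hfle : ∀ y ∈ P, f y ≤ f a) {t x : E}
    (ht : t ∈ openSegment ℝ a b) (hx : x ∈ P) (hfx : f a ≤ |f x|) :
    f x = f a ∨ midpoint ℝ t (-x) ∈ openSegment ℝ a b := by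
  rcases eq_or_ne f 0 with rfl | hf
  · simp
  have hle := hfle x hx
  have hge := hfle (-x) (hneg x hx)
  rw [map_neg] at hge
  rcases abs_cases (f x) with ⟨h, -⟩ | ⟨h, -⟩
  · exact Or.inl (by linarith)
  refine Or.inr (midpoint_mem_openSegment_of_mem_segment ht ?_)
  exact mem_segment_of_mem_extremePoints_of_apply_eq hE hf ha hb hab (hneg x hx) hfb
    (by rw [map_neg]; linarith)

end ConvexPlane

theorem finite_setOf_zsmul_add_zsmul_inter {E : Type*} [NormedAddCommGroup E]
    [NormedSpace ℝ E] [FiniteDimensional ℝ E] (hE : finrank ℝ E = 2) {u v : E}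
    (huv : LinearIndependent ℝ ![u, v]) {K : Set E} (hK : Bornology.IsBounded K) :
    ({p | ∃ m n : ℤ, p = m • u + n • v} ∩ K).Finite := by
  let B := basisOfLinearIndependentOfCardEqFinrank huv (by simp [hE])
  have hspan : {p | ∃ m n : ℤ, p = m • u + n • v} = Submodule.span ℤ (range B) := by
    ext p
    simp only [B, coe_basisOfLinearIndependentOfCardEqFinrank, Matrix.range_cons_cons_empty,
      SetLike.mem_coe, Submodule.mem_span_pair, mem_ofPred_eq, eq_comm (a := p)]
  rw [hspan, inter_comm]
  exact ZSpan.setFinite_inter B hK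

theorem countable_of_finite_inter_isBounded {E : Type*} [SeminormedAddCommGroup E] {Λ : Set E}
    (hΛ : ∀ K : Set E, Bornology.IsBounded K → (Λ ∩ K).Finite) : Λ.Countable := by
  refine (countable_iUnion fun n : ℕ => (hΛ _ (Metric.isBounded_closedBall (x := 0)
    (r := n))).countable).mono fun p hp => ?_
  obtain ⟨n, hn⟩ := exists_nat_ge ‖p‖
  exact mem_iUnion.2 ⟨n, hp, mem_closedBall_zero_iff.2 hn⟩

section Approach

variable {E : Type*} [NormedAddCommGroup E] [NormedSpace ℝ E] {P : Set E}

theorem IsClosed.eventually_sub_smul_mem_interior_of_add_smul_mem (hP : IsClosed P) {x v : E}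
    (hx : x ∈ frontier P → ∀ ε : ℝ, 0 < ε → x + ε • v ∉ P) :
    ∀ᶠ ε in 𝓝[>] (0 : ℝ), x + ε • v ∈ P → x - ε • v ∈ interior P := by
  have hlim : ∀ w : E, Tendsto (fun ε : ℝ => x + ε • w) (𝓝[>] 0) (𝓝 x) := fun w =>
    (Continuous.tendsto' (by fun_prop) 0 x (by simp)).mono_left nhdsWithin_le_nhds
  by_cases hint : x ∈ interior P
  · filter_upwards [(hlim (-v)).eventually (isOpen_interior.mem_nhds hint)] with ε hε _
    rw [sub_eq_add_neg, ← smul_neg]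
    exact hε
  by_cases hxP : x ∈ P
  · filter_upwards [self_mem_nhdsWithin] with ε hε hmem
    exact absurd hmem (hx ⟨subset_closure hxP, hint⟩ ε hε)
  · filter_upwards [(hlim v).eventually (hP.isOpen_compl.mem_nhds hxP)] with ε hε hmem
    exact absurd hmem hε

theorem IsClosed.eventually_forall_sub_mem_interior_of_add_mem (hP : IsClosed P)
    (hPb : Bornology.IsBounded P) {Λ : Set E}
    (hΛ : ∀ K : Set E, Bornology.IsBounded K → (Λ ∩ K).Finite) {y v : E}
    (hy : ∀ l ∈ Λ, y - l ∈ frontier P → ∀ ε : ℝ, 0 < ε → y - l + ε • v ∉ P) :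
    ∀ᶠ ε in 𝓝[>] (0 : ℝ), ∀ l ∈ Λ, y + ε • v - l ∈ P → y - ε • v - l ∈ interior P := by
  obtain ⟨R, hR⟩ := hPb.subset_closedBall 0
  set A := Λ ∩ Metric.closedBall 0 (‖y‖ + ‖v‖ + R)
  have hA : ∀ᶠ ε in 𝓝[>] (0 : ℝ), ∀ l ∈ A, y - l + ε • v ∈ P → y - l - ε • v ∈ interior P :=
    (hΛ _ Metric.isBounded_closedBall).eventually_all.2 fun l hl =>
      hP.eventually_sub_smul_mem_interior_of_add_smul_mem (hy l hl.1)
  filter_upwards [hA, Ioo_mem_nhdsGT (zero_lt_one' ℝ)] with ε hε hε₁ l hl hmem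
  have hlA : l ∈ A := by
    refine ⟨hl, mem_closedBall_zero_iff.2 ?_⟩
    have hmemR := mem_closedBall_zero_iff.1 (hR hmem)
    calc ‖l‖ = ‖(y + ε • v) - (y + ε • v - l)‖ := by rw [sub_sub_cancel]
      _ ≤ ‖y‖ + ε * ‖v‖ + R := by
        grw [norm_sub_le, norm_add_le, norm_smul, Real.norm_of_nonneg hε₁.1.le, hmemR]
      _ ≤ ‖y‖ + ‖v‖ + R := by gcongr; exact mul_le_of_le_one_left (norm_nonneg v) hε₁.2.le
  rw [sub_right_comm]
  exact hε l hlA (by rwa [sub_add_eq_add_sub])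

end Approach

theorem IsKFoldTiling.exists_sub_mem_and_sub_notMem_interior {K X : Set (ℝ × ℝ)} {k : ℕ}
    (htile : IsKFoldTiling K X k) {x₀ y z : ℝ × ℝ} (hx₀ : x₀ ∈ X) (hy : y - x₀ ∉ K)
    (hz : z - x₀ ∈ interior K) : ∃ x ∈ X, y - x ∈ K ∧ z - x ∉ interior K := by
  classical
  by_contra! H
  obtain ⟨S, hSX, hkS⟩ := htile.1 y
  have hx₀S : x₀ ∉ S := fun h => hy (hSX h).2
  have hins := htile.2 z (insert x₀ S) (by
    rw [Finset.coe_insert, insert_subset_iff]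
    exact ⟨⟨hx₀, hz⟩, fun x hx => ⟨(hSX hx).1, H x (hSX hx).1 (hSX hx).2⟩⟩)
  rw [Finset.card_insert_of_notMem hx₀S] at hins
  omega

theorem IsKFoldTiling.exists_sub_mem_frontier_and_add_smul_mem {P Λ : Set (ℝ × ℝ)} {k : ℕ}
    (htile : IsKFoldTiling P Λ k) (hP : Convex ℝ P) (hPc : IsCompact P)
    (h0 : (0 : ℝ × ℝ) ∈ interior P) (h0Λ : (0 : ℝ × ℝ) ∈ Λ)
    (hΛ : ∀ K : Set (ℝ × ℝ), Bornology.IsBounded K → (Λ ∩ K).Finite) {t : ℝ × ℝ}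
    (ht : t ∈ frontier P) : ∃ l ∈ Λ, t - l ∈ frontier P ∧ ∃ ε : ℝ, 0 < ε ∧ t - l + ε • t ∈ P := by
  by_contra! H
  obtain ⟨ε, hε, hε₀, hε₁⟩ := ((hPc.isClosed.eventually_forall_sub_mem_interior_of_add_mem
    hPc.isBounded hΛ H).and (Ioo_mem_nhdsGT one_pos)).exists
  have hin : ε • (0 : ℝ × ℝ) + (1 - ε) • t ∈ interior P :=
    hP.combo_interior_self_mem_interior h0 (hPc.isClosed.frontier_subset ht) hε₀
      (sub_nonneg.2 hε₁.le) (add_sub_cancel ε 1)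
  obtain ⟨l, hl, hlout, hlin⟩ := htile.exists_sub_mem_and_sub_notMem_interior h0Λ
    (y := t + ε • t) (z := t - ε • t) (by simpa using H 0 h0Λ (by simpa using ht) ε hε₀)
    (by simpa [sub_smul] using hin)
  exact hlin (hε l hl hlout)

theorem edge_relint_contains_half_lattice_point_general (V : Finset (ℝ × ℝ))
    (P : Set (ℝ × ℝ)) (hP : P = convexHull ℝ ↑V) (hint : (interior P).Nonempty)
    (hsymm : ∀ x ∈ P, -x ∈ P)
    (Λ : Set (ℝ × ℝ))
    (hΛ : ∃ u v : ℝ × ℝ, LinearIndependent ℝ ![u, v] ∧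
      Λ = {p | ∃ m n : ℤ, p = m • u + n • v})
    (k : ℕ) (htile : IsKFoldTiling P Λ k) :
    ∀ a b : ℝ × ℝ, a ≠ b →
      a ∈ Set.extremePoints ℝ P → b ∈ Set.extremePoints ℝ P →
      segment ℝ a b ⊆ frontier P →
      ∃ p ∈ openSegment ℝ a b, (2:ℝ) • p ∈ Λ := by
  intro a b hab ha hb hedge
  have hconv : Convex ℝ P := hP ▸ convex_convexHull ℝ _
  have hcpt : IsCompact P := hP ▸ V.finite_toSet.isCompact_convexHull ℝ
  have h0 : (0 : ℝ × ℝ) ∈ interior P := hconv.zero_mem_interior_of_neg_mem hint hsymm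
  obtain ⟨u, v, huv, rfl⟩ := hΛ
  have hΛfin := fun K (hK : Bornology.IsBounded K) =>
    finite_setOf_zsmul_add_zsmul_inter (by simp) huv hK
  obtain ⟨f, hc, hfb, hfle⟩ := hconv.exists_forall_le_of_segment_subset_frontier h0 ha.1 hb.1 hedge
  by_contra! hcon
  obtain ⟨t, ht, hgood⟩ := hconv.exists_mem_openSegment_forall_le_abs_apply_sub (by simp)
    hcpt.isClosed h0 ha.1 (hsymm a ha.1) hab hfb (countable_of_finite_inter_isBounded hΛfin)
  have hft : f t = f a := f.apply_eq_of_mem_segment (openSegment_subset_segment ℝ a b ht) hfb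
  obtain ⟨l, hl, hfr, ε, hε, hmem⟩ := htile.exists_sub_mem_frontier_and_add_smul_mem hconv hcpt h0
    ⟨0, 0, by simp⟩ hΛfin (hedge (openSegment_subset_segment ℝ a b ht))
  rcases apply_eq_or_midpoint_neg_mem_openSegment (by simp) hsymm ha hb hab hfb hfle ht
    (hcpt.isClosed.frontier_subset hfr) (hgood l hl hfr) with htop | hmid
  · have := hfle _ hmem
    rw [map_add, map_smul, htop, hft, smul_eq_mul] at this
    nlinarith
  · exact hcon _ hmid (by simpa [midpoint_eq_smul_add, smul_smul] using hl)

/-- Bolle's condition 2: if a centrally symmetric convex polygon `P` centered at the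
origin forms a `k`-fold lattice tiling with lattice `Λ`, then the relative interior of
every edge of `P` (a segment between two extreme points lying in the boundary of `P`)
contains a point of `(1/2)Λ`. -/
theorem edge_relint_contains_half_lattice_point (V : Finset (ℝ × ℝ))
    (P : Set (ℝ × ℝ)) (hP : P = convexHull ℝ ↑V) (hint : (interior P).Nonempty)
    (hsymm : ∀ x ∈ P, -x ∈ P)
    (Λ : Set (ℝ × ℝ))
    (hΛ : ∃ u v : ℝ × ℝ, LinearIndependent ℝ ![u, v] ∧
      Λ = {p | ∃ m n : ℤ, p = m • u + n • v})
    (k : ℕ) (hk : 0 < k) (htile : IsKFoldTiling P Λ k) :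
    ∀ a b : ℝ × ℝ, a ≠ b →
      a ∈ Set.extremePoints ℝ P → b ∈ Set.extremePoints ℝ P →
      segment ℝ a b ⊆ frontier P →
      ∃ p ∈ openSegment ℝ a b, (2:ℝ) • p ∈ Λ :=
  edge_relint_contains_half_lattice_point_general V P hP hint hsymm Λ hΛ k htile
end
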